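/- Suppose there exist constants 0 < m ≤ 1 ≤ M < ∞ such that m ≤ p̂(x)/p(x) ≤ M for μ-a.e. x. Then the reverse Kullback–Leibler divergence decomposes as rKL(P‖P̂) = ∫ p̂(x) log(p̂(x)/p(x)) dμ(x) = ∫_m^M (1/λ) · D_λ^PR(P‖P̂) dλ. -/

import Mathlib

/-!
For a single point with `u = p / p̂` and `p̂ / p ∈ [m, M]`, the map `λ ↦ max (λ u) 1 / λ` equals
`1 / λ` below `λ = 1 / u` and the constant `u` above it, so
`∫_m^M f_λ(u) / λ dλ = log (1 / u) + M (u - 1)`. Multiplying by `p̂` gives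
`p̂ log (p̂ / p) + M (p - p̂)`, and the linear term integrates to `0`. Fubini applies because
`f_λ` is `λ`-Lipschitz in `u` with `f_λ(1) = 0`, so `|p̂ f_λ(p / p̂)| / λ ≤ |p - p̂|`.
-/

open MeasureTheory Real Set

/-- The generator `f_λ` of the PR-divergence `D_λ^PR`. -/
def prGenerator (lam u : ℝ) : ℝ := max (lam * u) 1 - max lam 1

lemma abs_prGenerator_le {lam : ℝ} (hlam : 0 ≤ lam) (u : ℝ) :
    |prGenerator lam u| ≤ lam * |u - 1| := by
  calc |prGenerator lam u| ≤ |lam * u - lam| := abs_max_sub_max_le_abs _ _ _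
    _ = lam * |u - 1| := by rw [← mul_sub_one, abs_mul, abs_of_nonneg hlam]

lemma abs_mul_prGenerator_div_le {lam q : ℝ} (hlam : 0 ≤ lam) (hq : 0 < q) (p : ℝ) :
    |q * prGenerator lam (p / q)| ≤ lam * |p - q| := by
  calc |q * prGenerator lam (p / q)| ≤ q * (lam * |p / q - 1|) := by
        rw [abs_mul, abs_of_pos hq]; gcongr; exact abs_prGenerator_le hlam _
    _ = lam * |p - q| := by
        rw [mul_left_comm, ← abs_of_pos hq, ← abs_mul, abs_of_pos hq, mul_sub_one,
          mul_div_cancel₀ _ hq.ne']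

lemma intervalIntegrable_one_div_mul_max {a b : ℝ} (ha : 0 < a) (hb : 0 < b) (u : ℝ) :
    IntervalIntegrable (fun lam => 1 / lam * max (lam * u) 1) volume a b := by
  refine ContinuousOn.intervalIntegrable
    (ContinuousOn.mul (continuousOn_const.div continuousOn_id fun lam hlam => ?_) (by fun_prop))
  exact (lt_of_lt_of_le (lt_min ha hb) hlam.1).ne'

lemma integral_one_div_mul_max {a b u : ℝ} (ha : 0 < a) (hau : a ≤ u⁻¹) (hub : u⁻¹ ≤ b) :
    ∫ lam in a..b, 1 / lam * max (lam * u) 1 = log (u⁻¹ / a) + (u * b - 1) := by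
  have hu : 0 < u := inv_pos.mp (ha.trans_le hau)
  have hc : 0 < u⁻¹ := inv_pos.mpr hu
  have hb : 0 < b := hc.trans_le hub
  have below : ∫ lam in a..u⁻¹, 1 / lam * max (lam * u) 1 = log (u⁻¹ / a) := by
    rw [← integral_one_div_of_pos ha hc]
    refine intervalIntegral.integral_congr fun lam hlam => ?_
    rw [uIcc_of_le hau] at hlam
    have : lam * u ≤ 1 := by rw [← le_mul_inv_iff₀ hu, one_mul]; exact hlam.2
    simp only [max_eq_right this, mul_one]
  have above : ∫ lam in u⁻¹..b, 1 / lam * max (lam * u) 1 = u * b - 1 := by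
    rw [intervalIntegral.integral_congr (g := fun _ => u) fun lam hlam => ?_]
    · rw [intervalIntegral.integral_const, smul_eq_mul, sub_mul, inv_mul_cancel₀ hu.ne',
        mul_comm]
    rw [uIcc_of_le hub] at hlam
    have hlam0 : 0 < lam := hc.trans_le hlam.1
    have : 1 ≤ lam * u := (inv_le_iff_one_le_mul₀ hu).mp hlam.1
    rw [max_eq_left this, one_div, inv_mul_cancel_left₀ hlam0.ne']
  rw [← intervalIntegral.integral_add_adjacent_intervals
    (intervalIntegrable_one_div_mul_max ha hc u) (intervalIntegrable_one_div_mul_max hc hb u),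
    below, above]

lemma integral_one_div_mul_prGenerator {m M u : ℝ} (hm : 0 < m) (hm1 : m ≤ 1) (hM1 : 1 ≤ M)
    (hmu : m ≤ u⁻¹) (huM : u⁻¹ ≤ M) :
    ∫ lam in m..M, 1 / lam * prGenerator lam u = log u⁻¹ + M * (u - 1) := by
  have hM : 0 < M := one_pos.trans_le hM1
  have hu : u⁻¹ ≠ 0 := (hm.trans_le hmu).ne'
  have at_u := integral_one_div_mul_max hm hmu huM
  have at_one := integral_one_div_mul_max (u := 1) (b := M) hm (by rwa [inv_one])
    (by rwa [inv_one])
  simp only [mul_one, one_mul, inv_one] at at_one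
  simp only [prGenerator, mul_sub]
  rw [intervalIntegral.integral_sub (intervalIntegrable_one_div_mul_max hm hM u)
    (by simpa using intervalIntegrable_one_div_mul_max hm hM 1), at_u, at_one,
    log_div hu hm.ne', log_div one_ne_zero hm.ne', log_one]
  ring

lemma integral_one_div_mul_mul_prGenerator {m M p q : ℝ} (hm : 0 < m) (hm1 : m ≤ 1)
    (hM1 : 1 ≤ M) (hq : q ≠ 0) (hmr : m ≤ q / p) (hrM : q / p ≤ M) :
    ∫ lam in m..M, 1 / lam * (q * prGenerator lam (p / q)) = q * log (q / p) + M * (p - q) := by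
  simp_rw [mul_left_comm _ q]
  rw [intervalIntegral.integral_const_mul, integral_one_div_mul_prGenerator hm hm1 hM1
    (by rwa [inv_div]) (by rwa [inv_div]), inv_div]
  field_simp

section Integral

variable {X : Type*} [MeasurableSpace X] {μ : Measure X} {p q : X → ℝ}

lemma integrable_mul_log_div_of_ratio_mem (hp : Measurable p) (hq : Measurable q)
    (hqi : Integrable q μ) {m M : ℝ} (hm : 0 < m)
    (hratio : ∀ᵐ x ∂μ, m ≤ q x / p x ∧ q x / p x ≤ M) :
    Integrable (fun x => q x * log (q x / p x)) μ := by
  refine (hqi.norm.mul_const (max |log m| |log M|)).mono'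
    (hq.mul (hq.div hp).log).aestronglyMeasurable ?_
  filter_upwards [hratio] with x ⟨hmr, hrM⟩
  rw [norm_mul, Real.norm_eq_abs]
  gcongr
  exact abs_le_max_abs_abs (log_le_log hm hmr) (log_le_log (hm.trans_le hmr) hrM)

lemma integrable_prod_one_div_mul_prGenerator [SFinite μ] (hp : Measurable p)
    (hq : Measurable q) (hpi : Integrable p μ) (hqi : Integrable q μ) (hq0 : ∀ᵐ x ∂μ, 0 < q x)
    {m M : ℝ} (hm : 0 < m) (hM : 0 < M) :
    Integrable (Function.uncurry fun lam x => 1 / lam * (q x * prGenerator lam (p x / q x)))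
      ((volume.restrict (uIoc m M)).prod μ) := by
  have : IsFiniteMeasure (volume.restrict (uIoc m M)) := isFiniteMeasure_restrict_Ioc _ _
  have hlam : ∀ᵐ z ∂(volume.restrict (uIoc m M)).prod μ, 0 < z.1 :=
    Measure.quasiMeasurePreserving_fst.ae <| (ae_restrict_mem measurableSet_uIoc).mono
      fun lam hlam => (lt_min hm hM).trans_le (le_of_lt hlam.1)
  have hqz : ∀ᵐ z ∂(volume.restrict (uIoc m M)).prod μ, 0 < q z.2 :=
    Measure.quasiMeasurePreserving_snd.ae hq0
  have hmeas : Measurable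
      (Function.uncurry fun lam x => 1 / lam * (q x * prGenerator lam (p x / q x))) := by
    simp only [prGenerator]; fun_prop
  refine ((hpi.sub hqi).abs.comp_snd _).mono' hmeas.aestronglyMeasurable ?_
  filter_upwards [hlam, hqz] with z hz1 hz2
  rw [Function.uncurry_apply_pair, Real.norm_eq_abs, abs_mul, abs_of_pos (one_div_pos.mpr hz1),
    one_div, inv_mul_le_iff₀ hz1]
  exact abs_mul_prGenerator_div_le hz1.le hz2 _

end Integral

theorem rKL_eq_weighted_integral_PRdiv_general
    {X : Type*} [MeasurableSpace X] (μ : Measure X) [SigmaFinite μ]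
    (p phat : X → ℝ) (hp : Measurable p) (hphat : Measurable phat)
    (hpint : ∫ x, p x ∂μ = 1) (hphatint : ∫ x, phat x ∂μ = 1)
    (hphatpos : ∀ᵐ x ∂μ, 0 < phat x)
    (m M : ℝ) (hm : 0 < m) (hm1 : m ≤ 1) (hM1 : 1 ≤ M)
    (hratio : ∀ᵐ x ∂μ, m ≤ phat x / p x ∧ phat x / p x ≤ M) :
    ∫ x, phat x * Real.log (phat x / p x) ∂μ =
      ∫ lam in m..M,
        (1 / lam) *
          ∫ x, phat x * (max (lam * (p x / phat x)) 1 - max lam 1) ∂μ := by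
  have hpi : Integrable p μ := .of_integral_ne_zero (by simp [hpint])
  have hphati : Integrable phat μ := .of_integral_ne_zero (by simp [hphatint])
  calc ∫ x, phat x * log (phat x / p x) ∂μ
      = ∫ x, (phat x * log (phat x / p x) + M * (p x - phat x)) ∂μ := by
        have hlin : Integrable (fun x => M * (p x - phat x)) μ := (hpi.sub hphati).const_mul M
        rw [integral_add (integrable_mul_log_div_of_ratio_mem hp hphat hphati hm hratio) hlin,
          integral_const_mul, integral_sub hpi hphati, hpint, hphatint, sub_self, mul_zero,
          add_zero]
    _ = ∫ x, (∫ lam in m..M, 1 / lam * (phat x * prGenerator lam (p x / phat x))) ∂μ := by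
        refine integral_congr_ae ?_
        filter_upwards [hphatpos, hratio] with x hx ⟨hmr, hrM⟩
        exact (integral_one_div_mul_mul_prGenerator hm hm1 hM1 hx.ne' hmr hrM).symm
    _ = ∫ lam in m..M, ∫ x, 1 / lam * (phat x * prGenerator lam (p x / phat x)) ∂μ :=
        (intervalIntegral_integral_swap (integrable_prod_one_div_mul_prGenerator hp hphat hpi
          hphati hphatpos hm (one_pos.trans_le hM1))).symm
    _ = _ := by simp_rw [integral_const_mul]; rfl

/-- The reverse KL divergence decomposes as a weighted integral of PR-divergences:
`rKL(P‖P̂) = ∫_m^M (1/λ) · D_λ^PR(P‖P̂) dλ`. -/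
theorem rKL_eq_weighted_integral_PRdiv
    {X : Type*} [MeasurableSpace X] (μ : Measure X) [SigmaFinite μ]
    (p phat : X → ℝ) (hp : Measurable p) (hphat : Measurable phat)
    (hp0 : ∀ x, 0 ≤ p x) (hphat0 : ∀ x, 0 ≤ phat x)
    (hpint : ∫ x, p x ∂μ = 1) (hphatint : ∫ x, phat x ∂μ = 1)
    (hppos : ∀ᵐ x ∂μ, 0 < p x) (hphatpos : ∀ᵐ x ∂μ, 0 < phat x)
    (m M : ℝ) (hm : 0 < m) (hm1 : m ≤ 1) (hM1 : 1 ≤ M)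
    (hratio : ∀ᵐ x ∂μ, m ≤ phat x / p x ∧ phat x / p x ≤ M) :
    ∫ x, phat x * Real.log (phat x / p x) ∂μ =
      ∫ lam in m..M,
        (1 / lam) *
          ∫ x, phat x * (max (lam * (p x / phat x)) 1 - max lam 1) ∂μ :=
  rKL_eq_weighted_integral_PRdiv_general μ p phat hp hphat hpint hphatint hphatpos m M hm hm1 hM1
    hratio
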